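/- arXiv:2106.07302 — 2 statements merged into one kernel-verified Lean document; each statement's English description precedes it below -/
import Mathlib

section
/- Diffusion distance equals Euclidean distance in diffusion coordinates: for P = D⁻¹W with W symmetric positive and eigen-decomposition P v_k = λ_k v_k, u_k^T P = λ_k u_k^T (biorthogonal, with u_0 the stationary left eigenvector), the squared diffusion distance Dist_t²(i,j) = Σ_k [(P^t)_{ik} - (P^t)_{jk}]² / u_0(k) equals Σ_{k≥1} λ_k^{2t} (v_k(i) - v_k(j))². -/
/-!
Let `M` be the orthogonal matrix whose rows are the `w k`. The eigen-equations say
`S = Mᵀ Λ M`, and `P = D^{-1/2} S D^{1/2}`, so `P^t = D^{-1/2} Mᵀ Λ^t M D^{1/2}`.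
Up to the total volume `∑ d`, weighting by `1 / u 0 k = (∑ d) / d k` divides the `k`-th entry of
the difference of rows `i` and `j` of `P^t` by `√(d k)`, which leaves `Mᵀ` applied to the vector
`(λ_m^t (v m i - v m j) / √(∑ d))_m`; since `Mᵀ` is an isometry the distance becomes
`∑ λ_m^{2t} (v m i - v m j)²`, whose `m = 0` term vanishes because `v 0` is constant.
-/

open Matrix

section

variable {ι : Type*} [Fintype ι] [DecidableEq ι]

namespace Matrix

section CommRing

variable {R : Type*} [CommRing R]

theorem of_mul_transpose_eq_one {w : ι → ι → R}
    (horth : ∀ j k, ∑ i, w j i * w k i = if j = k then 1 else 0) :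
    of w * (of w)ᵀ = 1 := by
  ext j k
  simp [mul_apply, one_apply, horth]

theorem sum_sq_transpose_mulVec {M : Matrix ι ι R}
    (hM : M * Mᵀ = 1) (c : ι → R) : ∑ k, (Mᵀ *ᵥ c) k ^ 2 = ∑ k, c k ^ 2 := calc
  ∑ k, (Mᵀ *ᵥ c) k ^ 2 = (Mᵀ *ᵥ c) ⬝ᵥ (Mᵀ *ᵥ c) := by simp [dotProduct, sq]
  _ = ((M * Mᵀ) *ᵥ c) ⬝ᵥ c := by
    rw [dotProduct_mulVec, vecMul_transpose, mulVec_mulVec]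
  _ = ∑ k, c k ^ 2 := by simp [hM, dotProduct, sq]

theorem eq_transpose_mul_diagonal_mul {S M : Matrix ι ι R}
    {lam : ι → R} (hM : M * Mᵀ = 1) (heig : ∀ k, S *ᵥ M k = lam k • M k) :
    S = Mᵀ * diagonal lam * M := by
  have hSM : S * Mᵀ = Mᵀ * diagonal lam := by
    ext a k
    rw [mul_diagonal, transpose_apply, mul_apply]
    simpa [mulVec, dotProduct, mul_comm (M k a)] using congrFun (heig k) a
  rw [← hSM, Matrix.mul_assoc, mul_eq_one_comm.mp hM, Matrix.mul_one]

theorem pow_eq_transpose_mul_diagonal_pow_mul {S M : Matrix ι ι R}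
    {lam : ι → R} (hM : M * Mᵀ = 1) (heig : ∀ k, S *ᵥ M k = lam k • M k) (n : ℕ) :
    S ^ n = Mᵀ * diagonal (lam ^ n) * M := by
  rw [eq_transpose_mul_diagonal_mul hM heig, ← diagonal_pow]
  exact Units.conj_pow ⟨Mᵀ, M, mul_eq_one_comm.mp hM, hM⟩ _ n

theorem transpose_mul_diagonal_mul_apply (M : Matrix ι ι R)
    (μ : ι → R) (a b : ι) : (Mᵀ * diagonal μ * M) a b = ∑ m, μ m * M m a * M m b := by
  rw [Matrix.mul_assoc, mul_apply]
  exact Finset.sum_congr rfl fun m _ => by rw [diagonal_mul, transpose_apply]; ring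

end CommRing

theorem sum_sq_sub_div_sq_of_eq_conj {K : Type*} [Field K] {A M : Matrix ι ι K}
    (hM : M * Mᵀ = 1) {μ s : ι → K} (hs : ∀ k, s k ≠ 0)
    (hA : A = diagonal (fun k => (s k)⁻¹) * (Mᵀ * diagonal μ * M) * diagonal s) (i j : ι) :
    ∑ k, (A i k - A j k) ^ 2 / s k ^ 2 = ∑ m, μ m ^ 2 * (M m i / s i - M m j / s j) ^ 2 := by
  set c : ι → K := fun m => μ m * (M m i / s i - M m j / s j)
  have hrow : ∀ k, (A i k - A j k) / s k = (Mᵀ *ᵥ c) k := by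
    intro k
    rw [hA, mul_diagonal, mul_diagonal, diagonal_mul, diagonal_mul, sub_div,
      mul_div_cancel_right₀ _ (hs k), mul_div_cancel_right₀ _ (hs k),
      transpose_mul_diagonal_mul_apply, transpose_mul_diagonal_mul_apply, Finset.mul_sum,
      Finset.mul_sum, ← Finset.sum_sub_distrib]
    refine Finset.sum_congr rfl fun m _ => ?_
    simp only [transpose_apply, c]
    ring
  calc ∑ k, (A i k - A j k) ^ 2 / s k ^ 2 = ∑ k, (Mᵀ *ᵥ c) k ^ 2 := by
        simp_rw [← div_pow, hrow]
    _ = ∑ m, c m ^ 2 := sum_sq_transpose_mulVec hM c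
    _ = _ := by simp_rw [c, mul_pow]

end Matrix

theorem eq_diagonal_inv_sqrt_mul_mul_diagonal_sqrt {W P S : Matrix ι ι ℝ} {d : ι → ℝ}
    (hdpos : ∀ i, 0 < d i) (hP : ∀ i j, P i j = W i j / d i) (hS : ∀ i j, S i j = W i j / (√(d i) * √(d j))) :
    P = diagonal (fun i => (√(d i))⁻¹) * S * diagonal (fun i => √(d i)) := by
  ext i j
  have hi := Real.sqrt_pos.2 (hdpos i)
  have hj := Real.sqrt_pos.2 (hdpos j)
  rw [mul_diagonal, diagonal_mul, hP, hS]
  field_simp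
  rw [Real.sq_sqrt (hdpos i).le, mul_div_cancel_right₀ _ (hdpos i).ne']

theorem pow_eq_diagonal_inv_sqrt_mul_pow_mul_diagonal_sqrt {W P S : Matrix ι ι ℝ} {d : ι → ℝ}
    (hdpos : ∀ i, 0 < d i) (hP : ∀ i j, P i j = W i j / d i)
    (hS : ∀ i j, S i j = W i j / (√(d i) * √(d j))) (n : ℕ) :
    P ^ n = diagonal (fun i => (√(d i))⁻¹) * S ^ n * diagonal (fun i => √(d i)) := by
  have hsqrt : ∀ i, √(d i) ≠ 0 := fun i => (Real.sqrt_pos.2 (hdpos i)).ne'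
  have hinv_mul : diagonal (fun i => (√(d i))⁻¹) * diagonal (fun i => √(d i)) = 1 := by
    simp [diagonal_mul_diagonal, hsqrt]
  rw [eq_diagonal_inv_sqrt_mul_mul_diagonal_sqrt hdpos hP hS]
  exact Units.conj_pow ⟨_, _, hinv_mul, mul_eq_one_comm.mp hinv_mul⟩ S n

theorem sum_sq_sub_pow_apply_div_eq_sum_eigen {W P S : Matrix ι ι ℝ} {d : ι → ℝ}
    (hdpos : ∀ i, 0 < d i) (hP : ∀ i j, P i j = W i j / d i)
    (hS : ∀ i j, S i j = W i j / (√(d i) * √(d j))) {w : ι → ι → ℝ} {lam : ι → ℝ}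
    (horth : ∀ j k, ∑ i, w j i * w k i = if j = k then 1 else 0)
    (heig : ∀ k, S *ᵥ w k = lam k • w k) (t : ℕ) (i j : ι) :
    ∑ k, ((P ^ t) i k - (P ^ t) j k) ^ 2 / d k =
      ∑ m, lam m ^ (2 * t) * (w m i / √(d i) - w m j / √(d j)) ^ 2 := by
  have hM := of_mul_transpose_eq_one horth
  have hPt := pow_eq_diagonal_inv_sqrt_mul_pow_mul_diagonal_sqrt hdpos hP hS t
  rw [pow_eq_transpose_mul_diagonal_pow_mul hM heig t] at hPt
  have hsqrt : ∀ k, √(d k) ≠ 0 := fun k => (Real.sqrt_pos.2 (hdpos k)).ne'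
  calc ∑ k, ((P ^ t) i k - (P ^ t) j k) ^ 2 / d k
      = ∑ k, ((P ^ t) i k - (P ^ t) j k) ^ 2 / √(d k) ^ 2 := by
        simp only [Real.sq_sqrt (hdpos _).le]
    _ = _ := by
        rw [sum_sq_sub_div_sq_of_eq_conj hM hsqrt hPt]
        simp only [Pi.pow_apply, ← pow_mul']
        rfl

end

theorem diffusion_distance_eq_euclidean_in_diffusion_coordinates_general
    (N : ℕ) [NeZero N] (W : Matrix (Fin N) (Fin N) ℝ)
    (hWpos : ∀ i j, 0 < W i j)
    (d : Fin N → ℝ) (hd : ∀ i, d i = ∑ j, W i j)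
    (P S : Matrix (Fin N) (Fin N) ℝ)
    (hP : ∀ i j, P i j = W i j / d i)
    (hS : ∀ i j, S i j = W i j / (Real.sqrt (d i) * Real.sqrt (d j)))
    (w : Fin N → Fin N → ℝ) (lam : Fin N → ℝ)
    (horth : ∀ j k, ∑ i, w j i * w k i = if j = k then 1 else 0)
    (heig : ∀ k, S.mulVec (w k) = lam k • w k)
    (hw0 : ∀ i, w 0 i = Real.sqrt (d i) / Real.sqrt (∑ j, d j))
    (v u : Fin N → Fin N → ℝ)
    (hv : ∀ k i, v k i = Real.sqrt (∑ j, d j) * w k i / Real.sqrt (d i))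
    (hu : ∀ k i, u k i = Real.sqrt (d i) * w k i / Real.sqrt (∑ j, d j))
    (t : ℕ) :
    ∀ i j, ∑ k, ((P ^ t) i k - (P ^ t) j k) ^ 2 / u 0 k =
      ∑ k ∈ Finset.univ \ {(0 : Fin N)}, lam k ^ (2 * t) * (v k i - v k j) ^ 2 := by
  intro i j
  have hdpos : ∀ a, 0 < d a := fun a =>
    hd a ▸ Finset.sum_pos (fun b _ => hWpos a b) Finset.univ_nonempty
  have hvol : 0 < ∑ b, d b := Finset.sum_pos (fun b _ => hdpos b) Finset.univ_nonempty
  have hu0 : ∀ k, u 0 k = d k / ∑ b, d b := fun k => by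
    rw [hu, hw0, mul_div_assoc', div_div, Real.mul_self_sqrt (hdpos k).le,
      Real.mul_self_sqrt hvol.le]
  have hv0 : ∀ a, v 0 a = 1 := fun a => by
    rw [hv, hw0]
    field_simp [(Real.sqrt_pos.2 (hdpos a)).ne', (Real.sqrt_pos.2 hvol).ne']
  calc ∑ k, ((P ^ t) i k - (P ^ t) j k) ^ 2 / u 0 k
      = (∑ b, d b) * ∑ k, ((P ^ t) i k - (P ^ t) j k) ^ 2 / d k := by
        rw [Finset.mul_sum]
        refine Finset.sum_congr rfl fun k _ => ?_
        rw [hu0, div_div_eq_mul_div, mul_comm, mul_div_assoc]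
    _ = ∑ m, lam m ^ (2 * t) * (v m i - v m j) ^ 2 := by
        rw [sum_sq_sub_pow_apply_div_eq_sum_eigen hdpos hP hS horth heig, Finset.mul_sum]
        refine Finset.sum_congr rfl fun m _ => ?_
        rw [hv, hv, mul_div_assoc, mul_div_assoc, ← mul_sub, mul_pow, Real.sq_sqrt hvol.le]
        ring
    _ = ∑ k ∈ Finset.univ \ {(0 : Fin N)}, lam k ^ (2 * t) * (v k i - v k j) ^ 2 := by
        rw [Finset.sdiff_singleton_eq_erase, ← Finset.add_sum_erase _ _ (Finset.mem_univ 0),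
          hv0, hv0, sub_self]
        ring

theorem diffusion_distance_eq_euclidean_in_diffusion_coordinates
    (N : ℕ) [NeZero N] (W : Matrix (Fin N) (Fin N) ℝ)
    (hWsymm : W.IsSymm) (hWpos : ∀ i j, 0 < W i j)
    (d : Fin N → ℝ) (hd : ∀ i, d i = ∑ j, W i j)
    (P S : Matrix (Fin N) (Fin N) ℝ)
    (hP : ∀ i j, P i j = W i j / d i)
    (hS : ∀ i j, S i j = W i j / (Real.sqrt (d i) * Real.sqrt (d j)))
    (w : Fin N → Fin N → ℝ) (lam : Fin N → ℝ)
    (horth : ∀ j k, ∑ i, w j i * w k i = if j = k then 1 else 0)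
    (heig : ∀ k, S.mulVec (w k) = lam k • w k)
    (hlam0 : lam 0 = 1)
    (hsimple : ∀ k, k ≠ 0 → lam k ≠ 1)
    (hw0 : ∀ i, w 0 i = Real.sqrt (d i) / Real.sqrt (∑ j, d j))
    (v u : Fin N → Fin N → ℝ)
    (hv : ∀ k i, v k i = Real.sqrt (∑ j, d j) * w k i / Real.sqrt (d i))
    (hu : ∀ k i, u k i = Real.sqrt (d i) * w k i / Real.sqrt (∑ j, d j))
    (t : ℕ) (ht : 0 < t) :
    ∀ i j, ∑ k, ((P ^ t) i k - (P ^ t) j k) ^ 2 / u 0 k =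
      ∑ k ∈ Finset.univ \ {(0 : Fin N)}, lam k ^ (2 * t) * (v k i - v k j) ^ 2 :=
  diffusion_distance_eq_euclidean_in_diffusion_coordinates_general N W hWpos d hd P S hP hS w lam
    horth heig hw0 v u hv hu t
end

section
/- The multiplication embedding identity: for matrices A₁, A₂ and the unitary U = diag(√(-i)·I, I, √(i)·I) on ℂ³ ⊗ ℂ^N, one has X₃(A₁A₂) = i·U [X₁(A₁), X₂(A₂)] U†, where X₁(A) = |0⟩⟨1| ⊗ A + |1⟩⟨0| ⊗ A† and X₂(A) = |1⟩⟨2| ⊗ A + |2⟩⟨1| ⊗ A†. -/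
/-!
Among the products of `R₁, R₁ᴴ` with `R₂, R₂ᴴ` only `R₁ R₂ = R₃` and `R₂ᴴ R₁ᴴ = R₃ᴴ` survive, so
`[X₁(A₁), X₂(A₂)] = R₃ ⊗ A₁A₂ - R₃ᴴ ⊗ (A₁A₂)ᴴ`. Conjugating by the diagonal phase `U` multiplies
`R₃ = |0⟩⟨2|` by `e^{-iπ/4} · conj (e^{iπ/4}) = -i` and `R₃ᴴ` by `i`, and the factor `i` in front
turns both signs back into `+`.
-/

open Matrix Kronecker

section

variable {m n α : Type*} [CommRing α] [StarRing α]

theorem commutator_kronecker_add_conjTranspose [Fintype m] [Fintype n]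
    (R S : Matrix m m α) (A B : Matrix n n α)
    (hSR : S * R = 0) (hRS_star : R * Sᴴ = 0) (hRstar_S : Rᴴ * S = 0) :
    (R ⊗ₖ A + Rᴴ ⊗ₖ Aᴴ) * (S ⊗ₖ B + Sᴴ ⊗ₖ Bᴴ) - (S ⊗ₖ B + Sᴴ ⊗ₖ Bᴴ) * (R ⊗ₖ A + Rᴴ ⊗ₖ Aᴴ) =
      (R * S) ⊗ₖ (A * B) - (R * S)ᴴ ⊗ₖ (A * B)ᴴ := by
  have hRstar_Sstar : Rᴴ * Sᴴ = 0 := by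
    rw [← conjTranspose_mul, hSR, conjTranspose_zero]
  have hSR_star : S * Rᴴ = 0 := by
    rw [← conjTranspose_conjTranspose S, ← conjTranspose_mul, hRS_star, conjTranspose_zero]
  have hSstar_R : Sᴴ * R = 0 := by
    rw [← conjTranspose_conjTranspose R, ← conjTranspose_mul, hRstar_S, conjTranspose_zero]
  simp only [add_mul, mul_add, ← mul_kronecker_mul, hSR, hRS_star, hRstar_S, hRstar_Sstar,
    hSR_star, hSstar_R, zero_kronecker, conjTranspose_mul]
  abel

theorem kronecker_one_mul_kronecker_mul_conjTranspose [Fintype m] [Fintype n] [DecidableEq n]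
    (D R : Matrix m m α) (B : Matrix n n α) :
    (D ⊗ₖ (1 : Matrix n n α)) * (R ⊗ₖ B) * (D ⊗ₖ (1 : Matrix n n α))ᴴ = (D * R * Dᴴ) ⊗ₖ B := by
  rw [conjTranspose_kronecker, conjTranspose_one, ← mul_kronecker_mul, ← mul_kronecker_mul,
    one_mul, mul_one]

theorem diagonal_mul_single_mul_conjTranspose_diagonal [Fintype m] [DecidableEq m]
    (d : m → α) (i j : m) (c : α) :
    diagonal d * single i j c * (diagonal d)ᴴ = single i j (d i * c * star (d j)) := by
  ext a b
  rw [diagonal_conjTranspose, mul_diagonal, diagonal_mul]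
  by_cases ha : i = a <;> by_cases hb : j = b <;> simp [single, ha, hb]

end

namespace Complex

theorem star_exp_ofReal_mul_I (θ : ℝ) : star (exp (θ * I)) = exp (-θ * I) := by
  rw [star_def, ← exp_conj, map_mul, conj_ofReal, conj_I, mul_neg, neg_mul]

theorem exp_neg_pi_div_four_mul_I_mul_self :
    exp (-(Real.pi / 4) * I) * exp (-(Real.pi / 4) * I) = -I := by
  rw [← exp_add, show -(Real.pi / 4 : ℂ) * I + -(Real.pi / 4) * I = -(Real.pi / 2 * I) by ring,
    exp_neg, exp_pi_div_two_mul_I, inv_I]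

theorem exp_pi_div_four_mul_I_mul_self :
    exp (Real.pi / 4 * I) * exp (Real.pi / 4 * I) = I := by
  rw [← exp_add, show (Real.pi / 4 : ℂ) * I + Real.pi / 4 * I = Real.pi / 2 * I by ring,
    exp_pi_div_two_mul_I]

end Complex

theorem multiplication_embedding_commutator_identity
    (N : ℕ) (A₁ A₂ : Matrix (Fin N) (Fin N) ℂ)
    (R₁ R₂ R₃ : Matrix (Fin 3) (Fin 3) ℂ)
    (hR₁ : R₁ = Matrix.single 0 1 1)
    (hR₂ : R₂ = Matrix.single 1 2 1)
    (hR₃ : R₃ = Matrix.single 0 2 1)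
    (X₁ X₂ X₃ : Matrix (Fin N) (Fin N) ℂ → Matrix (Fin 3 × Fin N) (Fin 3 × Fin N) ℂ)
    (hX₁ : ∀ A, X₁ A = R₁ ⊗ₖ A + R₁ᴴ ⊗ₖ Aᴴ)
    (hX₂ : ∀ A, X₂ A = R₂ ⊗ₖ A + R₂ᴴ ⊗ₖ Aᴴ)
    (hX₃ : ∀ A, X₃ A = R₃ ⊗ₖ A + R₃ᴴ ⊗ₖ Aᴴ)
    (U : Matrix (Fin 3 × Fin N) (Fin 3 × Fin N) ℂ)
    (hU : U = (Matrix.diagonal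
        ![Complex.exp (-(Real.pi / 4) * Complex.I), 1,
          Complex.exp ((Real.pi / 4) * Complex.I)]) ⊗ₖ (1 : Matrix (Fin N) (Fin N) ℂ)) :
    X₃ (A₁ * A₂) =
      Complex.I • (U * (X₁ A₁ * X₂ A₂ - X₂ A₂ * X₁ A₁) * Uᴴ) := by
  have hcomm : X₁ A₁ * X₂ A₂ - X₂ A₂ * X₁ A₁ = R₃ ⊗ₖ (A₁ * A₂) - R₃ᴴ ⊗ₖ (A₁ * A₂)ᴴ := by
    have hR₁R₂ : R₁ * R₂ = R₃ := by simp [hR₁, hR₂, hR₃]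
    rw [hX₁, hX₂, commutator_kronecker_add_conjTranspose, hR₁R₂] <;> simp [hR₁, hR₂]
  have hst : star (Complex.exp (Real.pi / 4 * Complex.I)) =
      Complex.exp (-(Real.pi / 4) * Complex.I) := by
    simpa [neg_mul] using Complex.star_exp_ofReal_mul_I (Real.pi / 4)
  have hs_sq := Complex.exp_neg_pi_div_four_mul_I_mul_self
  have ht_sq := Complex.exp_pi_div_four_mul_I_mul_self
  set s := Complex.exp (-(Real.pi / 4) * Complex.I)
  set t := Complex.exp (Real.pi / 4 * Complex.I)
  have hDR₃ : diagonal ![s, 1, t] * R₃ * (diagonal ![s, 1, t])ᴴ = (-Complex.I) • R₃ := by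
    rw [hR₃, diagonal_mul_single_mul_conjTranspose_diagonal, smul_single]
    simp [hst, hs_sq]
  have hDR₃_star : diagonal ![s, 1, t] * R₃ᴴ * (diagonal ![s, 1, t])ᴴ = Complex.I • R₃ᴴ := by
    rw [hR₃, conjTranspose_single, diagonal_mul_single_mul_conjTranspose_diagonal, smul_single]
    simp [← hst, ht_sq]
  rw [hX₃, hcomm, hU, mul_sub, sub_mul, kronecker_one_mul_kronecker_mul_conjTranspose,
    kronecker_one_mul_kronecker_mul_conjTranspose, hDR₃, hDR₃_star, smul_kronecker,
    smul_kronecker]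
  match_scalars <;> simp
end
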